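/- arXiv:math/0308054 — 3 statements merged into one kernel-verified Lean document; each statement's English description precedes it below -/
import Mathlib

section
/- Let i : A → X be a morphism of flows satisfying the S-homotopy extension property and let f : A → Y be any morphism of flows. Form the pushout in Flow of i along f, with resulting morphism j : Y → Z. Then j satisfies the S-homotopy extension property. In other terms, the pushout of a morphism of flows satisfying the S-homotopy extension property still satisfies the S-homotopy extension property. -/
open CategoryTheory Topology unitInterval

set_option autoImplicit false

/-- A flow: discrete 0-skeleton `State`, path space `Path`, source and target maps
(continuous with respect to the discrete topology on `State`), and a continuous
associative partial composition law defined on composable pairs. -/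
structure Flow' : Type 1 where
  State : Type
  Path : Type
  [topPath : TopologicalSpace Path]
  s : Path → State
  t : Path → State
  continuous_s : @Continuous Path State topPath ⊥ s
  continuous_t : @Continuous Path State topPath ⊥ t
  comp : ∀ x y : Path, t x = s y → Path
  s_comp : ∀ x y h, s (comp x y h) = s x
  t_comp : ∀ x y h, t (comp x y h) = t y
  comp_assoc : ∀ (x y z : Path) (h₁ : t x = s y) (h₂ : t y = s z),
      comp (comp x y h₁) z ((t_comp x y h₁).trans h₂) =
      comp x (comp y z h₂) (h₁.trans (s_comp y z h₂).symm)
  continuous_comp : Continuous (fun p : {p : Path × Path // t p.1 = s p.2} =>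
      comp p.1.1 p.1.2 p.2)

attribute [instance] Flow'.topPath

/-- Morphisms of flows. -/
structure FlowHom (X Y : Flow') : Type where
  toState : X.State → Y.State
  toPath : X.Path → Y.Path
  continuous_toPath : Continuous toPath
  s_toPath : ∀ x, Y.s (toPath x) = toState (X.s x)
  t_toPath : ∀ x, Y.t (toPath x) = toState (X.t x)
  comp_toPath : ∀ x y (h : X.t x = X.s y),
      toPath (X.comp x y h) =
      Y.comp (toPath x) (toPath y)
        (((t_toPath x).trans (congrArg toState h)).trans (s_toPath y).symm)

theorem FlowHom.ext' {X Y : Flow'} {f g : FlowHom X Y}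
    (h1 : f.toState = g.toState) (h2 : f.toPath = g.toPath) : f = g := by
  cases f; cases g; cases h1; cases h2; rfl

/-- The identity morphism of flows. -/
def FlowHom.id (X : Flow') : FlowHom X X where
  toState := fun a => a
  toPath := fun x => x
  continuous_toPath := continuous_id
  s_toPath _ := rfl
  t_toPath _ := rfl
  comp_toPath _ _ _ := rfl

/-- Composition of morphisms of flows. -/
def FlowHom.comp {X Y Z : Flow'} (f : FlowHom X Y) (g : FlowHom Y Z) : FlowHom X Z where
  toState := fun a => g.toState (f.toState a)
  toPath := fun x => g.toPath (f.toPath x)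
  continuous_toPath := g.continuous_toPath.comp f.continuous_toPath
  s_toPath x := by rw [g.s_toPath, f.s_toPath]
  t_toPath x := by rw [g.t_toPath, f.t_toPath]
  comp_toPath x y h := by (try dsimp only); rw [f.comp_toPath, g.comp_toPath]

instance : Category Flow' where
  Hom := FlowHom
  id := FlowHom.id
  comp := FlowHom.comp
  id_comp _ := FlowHom.ext' rfl rfl
  comp_id _ := FlowHom.ext' rfl rfl
  assoc _ _ _ := FlowHom.ext' rfl rfl

/-- The space of morphisms of flows `FLOW(X,Y)`, topologized (via the compact-open
topology on the path-space mapping and the topology of a discrete 0-skeleton). -/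
instance FlowHom.instTopologicalSpace (X Y : Flow') : TopologicalSpace (X ⟶ Y) :=
  letI : TopologicalSpace Y.State := ⊥
  TopologicalSpace.induced
    (fun f : FlowHom X Y => ((f.toState, ⟨f.toPath, f.continuous_toPath⟩) :
      (X.State → Y.State) × C(X.Path, Y.Path)))
    inferInstance

/-- The globe of a topological space. -/
def Glob (Z : Type) [TopologicalSpace Z] : Flow' where
  State := Bool
  Path := Z
  s _ := false
  t _ := true
  continuous_s := continuous_const
  continuous_t := continuous_const
  comp _ _ h := absurd h (by simp)
  s_comp _ _ h := absurd h (by simp)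
  t_comp _ _ h := absurd h (by simp)
  comp_assoc _ _ _ h₁ _ := absurd h₁ (by simp)
  continuous_comp := continuous_of_const fun a _ => absurd a.2 (by simp)

theorem Glob.not_composable {Z : Type} [TopologicalSpace Z] (x y : (Glob Z).Path) :
    ¬ (Glob Z).t x = (Glob Z).s y := by simp [Glob]

/-- The morphism of globes induced by a continuous map. -/
def globHom {U V : Type} [TopologicalSpace U] [TopologicalSpace V] (g : C(U, V)) :
    Glob U ⟶ Glob V where
  toState := fun b => b
  toPath := g
  continuous_toPath := g.continuous
  s_toPath _ := rfl
  t_toPath _ := rfl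
  comp_toPath x y h := absurd h (Glob.not_composable x y)

/-- The flow with 0-skeleton `S` and no nonconstant execution paths. -/
def discreteFlow (S : Type) : Flow' where
  State := S
  Path := Empty
  s := Empty.elim
  t := Empty.elim
  continuous_s := by letI : TopologicalSpace S := ⊥; exact continuous_of_const fun a => a.elim
  continuous_t := by letI : TopologicalSpace S := ⊥; exact continuous_of_const fun a => a.elim
  comp x := x.elim
  s_comp x := x.elim
  t_comp x := x.elim
  comp_assoc x := x.elim
  continuous_comp := continuous_of_const fun a => a.1.1.elim

/-- The initial flow (empty 0-skeleton, empty path space). -/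
def emptyFlow : Flow' := discreteFlow Empty

/-- The terminal flow `𝟏`: one state `0` and one nonconstant execution path `u`. -/
def oneFlow : Flow' where
  State := PUnit
  Path := PUnit
  s _ := PUnit.unit
  t _ := PUnit.unit
  continuous_s := continuous_const
  continuous_t := continuous_const
  comp _ _ _ := PUnit.unit
  s_comp _ _ _ := rfl
  t_comp _ _ _ := rfl
  comp_assoc _ _ _ _ _ := rfl
  continuous_comp := continuous_const

/-- The morphism of flows from a point to a flow determined by a state. -/
def ptHom (Y : Flow') (st : Y.State) : discreteFlow PUnit ⟶ Y where
  toState _ := st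
  toPath x := x.elim
  continuous_toPath := continuous_of_const fun a => a.elim
  s_toPath x := x.elim
  t_toPath x := x.elim
  comp_toPath x := x.elim

/-- An S-homotopy: a continuous `[0,1]`-indexed family of morphisms of flows
(jointly continuous on paths and, with respect to the discrete topology on the
0-skeletons, on states). -/
structure SHomotopy (X Y : Flow') : Type where
  hs : unitInterval → X.State → Y.State
  hp : unitInterval → X.Path → Y.Path
  continuous_hp : Continuous fun q : unitInterval × X.Path => hp q.1 q.2
  continuous_hs : @Continuous (unitInterval × X.State) Y.State
      (@instTopologicalSpaceProd _ _ _ ⊥) ⊥ (fun q => hs q.1 q.2)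
  s_hp : ∀ u x, Y.s (hp u x) = hs u (X.s x)
  t_hp : ∀ u x, Y.t (hp u x) = hs u (X.t x)
  comp_hp : ∀ u x y (h : X.t x = X.s y),
      hp u (X.comp x y h) = Y.comp (hp u x) (hp u y)
        (((t_hp u x).trans (congrArg (hs u) h)).trans ((s_hp u y)).symm)

/-- The morphism of flows obtained from an S-homotopy at time `u`. -/
def SHomotopy.at {X Y : Flow'} (H : SHomotopy X Y) (u : unitInterval) : X ⟶ Y where
  toState := H.hs u
  toPath := H.hp u
  continuous_toPath := H.continuous_hp.comp (Continuous.prodMk_right u)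
  s_toPath x := H.s_hp u x
  t_toPath x := H.t_hp u x
  comp_toPath x y h := H.comp_hp u x y h

/-- Two morphisms of flows are S-homotopic if they are the endpoints of an
S-homotopy. -/
def SHomotopic {X Y : Flow'} (f g : X ⟶ Y) : Prop :=
  ∃ H : SHomotopy X Y, H.at 0 = f ∧ H.at 1 = g

/-- The S-homotopy extension property for a morphism of flows `i : A ⟶ X`. -/
def HasSHEP {A X : Flow'} (i : A ⟶ X) : Prop :=
  ∀ (Y : Flow') (f : X ⟶ Y) (h : SHomotopy A Y), h.at 0 = i ≫ f →
    ∃ H : SHomotopy X Y, H.at 0 = f ∧ ∀ u, i ≫ H.at u = h.at u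

/-! ### Auxiliary machinery for the pushout SHEP theorem -/

/-- A continuous map from `[0,1]` to a space with the `⊥` (discrete) topology is
constant. -/
lemma continuous_bot_const {α : Type} {g : unitInterval → α}
    (hg : @Continuous _ _ _ ⊥ g) (u : unitInterval) : g u = g 0 := by
  letI : TopologicalSpace α := ⊥
  haveI : DiscreteTopology α := ⟨rfl⟩
  exact ((IsLocallyConstant.iff_continuous g).2 hg).apply_eq_of_preconnectedSpace u 0

lemma Flow'.s_const {W : Flow'} (γ : C(unitInterval, W.Path)) (u : unitInterval) :
    W.s (γ u) = W.s (γ 0) := by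
  letI : TopologicalSpace W.State := ⊥
  exact continuous_bot_const (W.continuous_s.comp γ.continuous) u

lemma Flow'.t_const {W : Flow'} (γ : C(unitInterval, W.Path)) (u : unitInterval) :
    W.t (γ u) = W.t (γ 0) := by
  letI : TopologicalSpace W.State := ⊥
  exact continuous_bot_const (W.continuous_t.comp γ.continuous) u

/-- The state part of an S-homotopy is constant in time. -/
lemma SHomotopy.hs_const {X W : Flow'} (H : SHomotopy X W) (u : unitInterval)
    (a : X.State) : H.hs u a = H.hs 0 a := by
  letI : TopologicalSpace X.State := ⊥
  letI : TopologicalSpace W.State := ⊥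
  have hc : @Continuous unitInterval W.State _ ⊥ (fun v => H.hs v a) :=
    H.continuous_hs.comp (continuous_id.prodMk continuous_const)
  exact continuous_bot_const hc u

lemma Flow'.composable_const {W : Flow'} (γ δ : C(unitInterval, W.Path))
    (h : W.t (γ 0) = W.s (δ 0)) (u : unitInterval) : W.t (γ u) = W.s (δ u) := by
  rw [Flow'.t_const γ u, Flow'.s_const δ u]; exact h

/-- The cocylinder (path flow) of a flow: paths are continuous `[0,1]`-families of
paths of `W`. -/
def PathFlow (W : Flow') : Flow' where
  State := W.State
  Path := C(unitInterval, W.Path)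
  s γ := W.s (γ 0)
  t γ := W.t (γ 0)
  continuous_s := by
    letI : TopologicalSpace W.State := ⊥
    exact W.continuous_s.comp (continuous_eval_const 0)
  continuous_t := by
    letI : TopologicalSpace W.State := ⊥
    exact W.continuous_t.comp (continuous_eval_const 0)
  comp γ δ h := ⟨fun u => W.comp (γ u) (δ u) (Flow'.composable_const γ δ h u),
    W.continuous_comp.comp (Continuous.subtype_mk (γ.continuous.prodMk δ.continuous)
      (Flow'.composable_const γ δ h))⟩
  s_comp γ δ h := W.s_comp _ _ _
  t_comp γ δ h := W.t_comp _ _ _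
  comp_assoc γ δ ε h₁ h₂ := by
    apply ContinuousMap.ext; intro u
    exact W.comp_assoc (γ u) (δ u) (ε u) _ _
  continuous_comp := by
    apply ContinuousMap.continuous_of_continuous_uncurry
    exact W.continuous_comp.comp (Continuous.subtype_mk
      (Continuous.prodMk
        (continuous_eval.comp
          (((continuous_fst.comp continuous_subtype_val).comp continuous_fst).prodMk
            continuous_snd))
        (continuous_eval.comp
          (((continuous_snd.comp continuous_subtype_val).comp continuous_fst).prodMk
            continuous_snd)))
      (fun q => Flow'.composable_const q.1.1.1 q.1.1.2 q.1.2 q.2))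

/-- An S-homotopy `X × [0,1] → W` as a morphism `X ⟶ PathFlow W`. -/
def SHomotopy.toHom {X W : Flow'} (H : SHomotopy X W) : X ⟶ PathFlow W where
  toState := H.hs 0
  toPath x := ⟨fun u => H.hp u x,
    H.continuous_hp.comp (continuous_id.prodMk continuous_const)⟩
  continuous_toPath := by
    show Continuous fun x : X.Path => (⟨fun u => H.hp u x, _⟩ : C(unitInterval, W.Path))
    apply ContinuousMap.continuous_of_continuous_uncurry
    exact H.continuous_hp.comp continuous_swap
  s_toPath x := H.s_hp 0 x
  t_toPath x := H.t_hp 0 x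
  comp_toPath x y h := by
    apply ContinuousMap.ext; intro u
    exact H.comp_hp u x y h

/-- Unfold the path space of the cocylinder. -/
def pathOf {W : Flow'} (γ : (PathFlow W).Path) : C(unitInterval, W.Path) := γ

/-- A morphism `X ⟶ PathFlow W` as an S-homotopy. -/
def homToSHomotopy {X W : Flow'} (φ : X ⟶ PathFlow W) : SHomotopy X W where
  hs _ := FlowHom.toState (Y := PathFlow W) φ
  hp u x := pathOf (FlowHom.toPath (Y := PathFlow W) φ x) u
  continuous_hp := by
    have hc : Continuous (fun x : X.Path =>
        pathOf (FlowHom.toPath (Y := PathFlow W) φ x)) :=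
      FlowHom.continuous_toPath (Y := PathFlow W) φ
    exact continuous_eval.comp
      ((hc.comp continuous_snd).prodMk continuous_fst)
  continuous_hs := by
    letI : TopologicalSpace X.State := ⊥
    letI : TopologicalSpace (PathFlow W).State := ⊥
    haveI : DiscreteTopology X.State := ⟨rfl⟩
    exact (continuous_of_discreteTopology
      (f := FlowHom.toState (Y := PathFlow W) φ)).comp continuous_snd
  s_hp u x := by
    rw [Flow'.s_const (pathOf (FlowHom.toPath (Y := PathFlow W) φ x)) u]
    exact FlowHom.s_toPath (Y := PathFlow W) φ x
  t_hp u x := by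
    rw [Flow'.t_const (pathOf (FlowHom.toPath (Y := PathFlow W) φ x)) u]
    exact FlowHom.t_toPath (Y := PathFlow W) φ x
  comp_hp u x y h :=
    congrFun (congrArg (fun g : C(unitInterval, W.Path) => (g : unitInterval → W.Path))
      (FlowHom.comp_toPath (Y := PathFlow W) φ x y h)) u

/-- Precomposition of an S-homotopy with a morphism of flows. -/
def SHomotopy.precomp {X Y W : Flow'} (φ : X ⟶ Y) (h : SHomotopy Y W) : SHomotopy X W where
  hs u a := h.hs u (FlowHom.toState φ a)
  hp u x := h.hp u (FlowHom.toPath φ x)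
  continuous_hp := h.continuous_hp.comp
    (continuous_fst.prodMk ((FlowHom.continuous_toPath φ).comp continuous_snd))
  continuous_hs := by
    letI : TopologicalSpace X.State := ⊥
    letI : TopologicalSpace Y.State := ⊥
    letI : TopologicalSpace W.State := ⊥
    haveI : DiscreteTopology X.State := ⟨rfl⟩
    exact h.continuous_hs.comp
      (continuous_fst.prodMk ((continuous_of_discreteTopology
        (f := FlowHom.toState φ)).comp continuous_snd))
  s_hp u x := by rw [h.s_hp, FlowHom.s_toPath φ]
  t_hp u x := by rw [h.t_hp, FlowHom.t_toPath φ]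
  comp_hp u x y hxy := by rw [FlowHom.comp_toPath φ, h.comp_hp]

lemma SHomotopy.precomp_at {X Y W : Flow'} (φ : X ⟶ Y) (h : SHomotopy Y W)
    (u : unitInterval) : (h.precomp φ).at u = φ ≫ h.at u :=
  FlowHom.ext' rfl rfl

lemma homToSHomotopy_comp_at {V X W : Flow'} (ψ : V ⟶ X) (φ : X ⟶ PathFlow W)
    (u : unitInterval) :
    ψ ≫ (homToSHomotopy φ).at u = (homToSHomotopy (ψ ≫ φ)).at u :=
  FlowHom.ext' rfl rfl

/-- **Statement 11.** The pushout of a morphism of flows satisfying the S-homotopy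
extension property still satisfies the S-homotopy extension property. -/
theorem hasSHEP_pushout {A X Y Z : Flow'} (i : A ⟶ X) (f : A ⟶ Y)
    (inl : X ⟶ Z) (j : Y ⟶ Z) (hP : IsPushout i f inl j) (hi : HasSHEP i) :
    HasSHEP j := by
  intro W g h h0
  -- Pull back `h` along `f` and apply SHEP of `i`.
  obtain ⟨H', H'0, H'comm⟩ := hi W (inl ≫ g) (h.precomp f) (by
    rw [SHomotopy.precomp_at, h0, ← Category.assoc, ← hP.w, Category.assoc])
  -- The two homotopies agree on `A`, hence glue over the pushout.
  have key : i ≫ H'.toHom = f ≫ h.toHom := by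
    refine FlowHom.ext' ?_ ?_
    · funext a
      exact congrFun (congrArg FlowHom.toState ((H'comm 0).trans
        (SHomotopy.precomp_at f h 0))) a
    · funext a
      apply ContinuousMap.ext; intro u
      exact congrFun (congrArg FlowHom.toPath ((H'comm u).trans
        (SHomotopy.precomp_at f h u))) a
  set K : Z ⟶ PathFlow W := hP.desc H'.toHom h.toHom key with hK
  refine ⟨homToSHomotopy K, ?_, ?_⟩
  · -- `H.at 0 = g` by the pushout universal property.
    apply hP.hom_ext
    · rw [homToSHomotopy_comp_at, hK, hP.inl_desc]
      have : (homToSHomotopy H'.toHom).at 0 = H'.at 0 := FlowHom.ext' rfl rfl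
      rw [this, H'0]
    · rw [homToSHomotopy_comp_at, hK, hP.inr_desc]
      have : (homToSHomotopy h.toHom).at 0 = h.at 0 := FlowHom.ext' rfl rfl
      rw [this, h0]
  · intro u
    rw [homToSHomotopy_comp_at, hK, hP.inr_desc]
    refine FlowHom.ext' ?_ rfl
    funext a
    exact (h.hs_const u a).symm
end

section
/- A morphism of flows f : X → Y has the right lifting property with respect to every morphism of J^gl (i.e. is a fibration of flows) if and only if ℙf : ℙX → ℙY is a Serre fibration of topological spaces. -/
open CategoryTheory Topology unitInterval

set_option autoImplicit false

/-- The closed `n`-disk. -/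
abbrev diskT (n : ℕ) : Type :=
  ↥(Metric.closedBall (0 : EuclideanSpace ℝ (Fin n)) 1)

/-- The `(n-1)`-sphere (empty for `n = 0`). -/
abbrev sphereT (n : ℕ) : Type :=
  ↥(Metric.sphere (0 : EuclideanSpace ℝ (Fin n)) 1)

/-- The inclusion `S^{n-1} ⊆ D^n`. -/
noncomputable def sphereInclCM (n : ℕ) : C(sphereT n, diskT n) :=
  ⟨fun x => ⟨x.1, Metric.sphere_subset_closedBall x.2⟩,
    Continuous.subtype_mk continuous_subtype_val _⟩

/-- The inclusion `D^n → [0,1] × D^n`, `x ↦ (0,x)`. -/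
noncomputable def diskInclCM (n : ℕ) : C(diskT n, unitInterval × diskT n) :=
  ⟨fun x => (0, x), Continuous.prodMk continuous_const continuous_id⟩

/-- The generating cofibration `Glob(S^{n-1}) ⟶ Glob(D^n)` of `I^gl`. -/
noncomputable def iglHom (n : ℕ) : Glob (sphereT n) ⟶ Glob (diskT n) :=
  globHom (sphereInclCM n)

/-- The generating trivial cofibration `Glob(D^n) ⟶ Glob([0,1] × D^n)` of `J^gl`. -/
noncomputable def jglHom (n : ℕ) : Glob (diskT n) ⟶ Glob (unitInterval × diskT n) :=
  globHom (diskInclCM n)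

section aux

/-- A map continuous into the discrete topology from a preconnected space is constant. -/
theorem const_bot {Z S : Type} [TopologicalSpace Z] [PreconnectedSpace Z]
    {g : Z → S} (hg : @Continuous Z S _ ⊥ g) (a b : Z) : g a = g b := by
  letI : TopologicalSpace S := ⊥
  haveI : DiscreteTopology S := ⟨rfl⟩
  exact PreconnectedSpace.constant ‹PreconnectedSpace Z› hg

instance diskT.nonempty (n : ℕ) : Nonempty (diskT n) :=
  ⟨⟨0, by simp⟩⟩

instance diskT.preconnected (n : ℕ) : PreconnectedSpace (diskT n) :=
  Subtype.preconnectedSpace (convex_closedBall (0 : EuclideanSpace ℝ (Fin n)) 1).isPreconnected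

/-- Build a morphism `Glob Z ⟶ X` from a continuous map into the path space,
for `Z` nonempty and preconnected. -/
noncomputable def mkGlob {Z : Type} [TopologicalSpace Z] [PreconnectedSpace Z] [Nonempty Z]
    (X : Flow') (g : C(Z, X.Path)) : Glob Z ⟶ X where
  toState := fun b => match b with
    | false => X.s (g (Classical.arbitrary Z))
    | true => X.t (g (Classical.arbitrary Z))
  toPath := g
  continuous_toPath := g.continuous
  s_toPath x :=
    show X.s (g x) = X.s (g (Classical.arbitrary Z)) from
      const_bot (@Continuous.comp Z X.Path X.State _ _ ⊥ g X.s X.continuous_s g.continuous)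
        x (Classical.arbitrary Z)
  t_toPath x :=
    show X.t (g x) = X.t (g (Classical.arbitrary Z)) from
      const_bot (@Continuous.comp Z X.Path X.State _ _ ⊥ g X.t X.continuous_t g.continuous)
        x (Classical.arbitrary Z)
  comp_toPath x y h := absurd h (Glob.not_composable x y)

end aux

/-- **Statement 15.** A morphism of flows is a fibration (has the RLP with respect
to all morphisms of `J^gl`) iff `ℙf : ℙX → ℙY` is a Serre fibration (has the RLP
with respect to all inclusions `D^n → [0,1] × D^n`). -/
theorem fibration_iff_serre_on_paths {X Y : Flow'} (f : X ⟶ Y) :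
    (∀ n : ℕ, HasLiftingProperty (jglHom n) f) ↔
    (∀ n : ℕ, HasLiftingProperty
      (show TopCat.of (diskT n) ⟶ TopCat.of (unitInterval × diskT n) from TopCat.ofHom (diskInclCM n))
      (show TopCat.of X.Path ⟶ TopCat.of Y.Path from
        TopCat.ofHom ⟨FlowHom.toPath f, FlowHom.continuous_toPath f⟩)) := by
  constructor
  · intro H n
    haveI := H n
    constructor
    intro top bot sq
    -- translate the topological square into a square of flows
    let top' : C(diskT n, X.Path) := top.hom
    let bot' : C(unitInterval × diskT n, Y.Path) := bot.hom
    let F : Glob (diskT n) ⟶ X := mkGlob X top'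
    let G : Glob (unitInterval × diskT n) ⟶ Y := mkGlob Y bot'
    have hw : ∀ x : diskT n, FlowHom.toPath f (top' x) = bot' (0, x) := fun x =>
      ConcreteCategory.congr_hom sq.w x
    have sq' : CommSq F (jglHom n) f G := by
      constructor
      apply FlowHom.ext'
      · funext b
        have h1 := FlowHom.s_toPath f (top' (Classical.arbitrary (diskT n)))
        have h2 := FlowHom.t_toPath f (top' (Classical.arbitrary (diskT n)))
        have c1 : ∀ z : unitInterval × diskT n, Y.s (bot' z) =
            Y.s (bot' (Classical.arbitrary _)) := fun z =>
          const_bot (@Continuous.comp _ Y.Path Y.State _ _ ⊥ bot' Y.s Y.continuous_s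
            bot'.continuous) z _
        have c2 : ∀ z : unitInterval × diskT n, Y.t (bot' z) =
            Y.t (bot' (Classical.arbitrary _)) := fun z =>
          const_bot (@Continuous.comp _ Y.Path Y.State _ _ ⊥ bot' Y.t Y.continuous_t
            bot'.continuous) z _
        cases b with
        | false =>
          show FlowHom.toState f (X.s (top' _)) = Y.s (bot' _)
          rw [← h1, hw, c1]
        | true =>
          show FlowHom.toState f (X.t (top' _)) = Y.t (bot' _)
          rw [← h2, hw, c2]
      · funext x
        exact hw x
    exact ⟨⟨⟨TopCat.ofHom ⟨FlowHom.toPath sq'.lift, FlowHom.continuous_toPath sq'.lift⟩,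
      TopCat.ext fun x => congrFun (congrArg FlowHom.toPath sq'.fac_left) x,
      TopCat.ext fun z => congrFun (congrArg FlowHom.toPath sq'.fac_right) z⟩⟩⟩
  · intro H n
    haveI := H n
    constructor
    intro F G sq
    -- translate the flow square into a topological square
    have hw : ∀ x : diskT n, FlowHom.toPath f (FlowHom.toPath F x) =
        FlowHom.toPath G (0, x) := fun x =>
      congrFun (congrArg FlowHom.toPath sq.w) x
    have sq' : CommSq
        (show TopCat.of (diskT n) ⟶ TopCat.of X.Path from
          TopCat.ofHom ⟨FlowHom.toPath F, FlowHom.continuous_toPath F⟩)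
        (show TopCat.of (diskT n) ⟶ TopCat.of (unitInterval × diskT n) from TopCat.ofHom (diskInclCM n))
        (show TopCat.of X.Path ⟶ TopCat.of Y.Path from
          TopCat.ofHom ⟨FlowHom.toPath f, FlowHom.continuous_toPath f⟩)
        (show TopCat.of (unitInterval × diskT n) ⟶ TopCat.of Y.Path from
          TopCat.ofHom ⟨FlowHom.toPath G, FlowHom.continuous_toPath G⟩) :=
      ⟨TopCat.ext fun x => hw x⟩
    let l : C(unitInterval × diskT n, X.Path) := sq'.lift.hom
    have fl : ∀ x : diskT n, l (0, x) = FlowHom.toPath F x := fun x =>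
      ConcreteCategory.congr_hom sq'.fac_left x
    have fr : ∀ z : unitInterval × diskT n, FlowHom.toPath f (l z) = FlowHom.toPath G z :=
      fun z => ConcreteCategory.congr_hom sq'.fac_right z
    have hS : ∀ z : unitInterval × diskT n, X.s (l z) = FlowHom.toState F false := fun z => by
      have h : X.s (l z) = X.s (l (0, z.2)) :=
        const_bot (@Continuous.comp _ X.Path X.State _ _ ⊥ l X.s X.continuous_s
          l.continuous) z (0, z.2)
      rw [h, fl]
      exact FlowHom.s_toPath F z.2
    have hT : ∀ z : unitInterval × diskT n, X.t (l z) = FlowHom.toState F true := fun z => by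
      have h : X.t (l z) = X.t (l (0, z.2)) :=
        const_bot (@Continuous.comp _ X.Path X.State _ _ ⊥ l X.t X.continuous_t
          l.continuous) z (0, z.2)
      rw [h, fl]
      exact FlowHom.t_toPath F z.2
    let L : Glob (unitInterval × diskT n) ⟶ X :=
      { toState := (FlowHom.toState F : (Glob (diskT n)).State → X.State)
        toPath := l
        continuous_toPath := l.continuous
        s_toPath := hS
        t_toPath := hT
        comp_toPath := fun x y h => absurd h (Glob.not_composable x y) }
    refine ⟨⟨⟨L, ?_, ?_⟩⟩⟩
    · apply FlowHom.ext'
      · funext b; rfl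
      · funext x; exact fl x
    · apply FlowHom.ext'
      · funext b
        exact congrFun (congrArg (FlowHom.toState (X := Glob (diskT n)) (Y := Y)) sq.w) b
      · funext z
        exact fr z
end

section
/- Suppose given a pushout square in Flow of the canonical morphism Glob(P) → Glob(Q) along a morphism Glob(P) → A, where P → Q is the inclusion of a deformation retract of topological spaces, and let f : A → X denote the resulting morphism into the pushout. Then the continuous map ℙf : ℙA → ℙX is a weak homotopy equivalence. -/
open CategoryTheory Topology unitInterval

set_option autoImplicit false

/-- The map induced on path components by a continuous map. -/
noncomputable def pi0Map {X Y : Type} [TopologicalSpace X] [TopologicalSpace Y]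
    (f : C(X, Y)) : ZerothHomotopy X → ZerothHomotopy Y :=
  Quotient.map f (fun _ _ h => Nonempty.map (fun p => p.map f.continuous) h)

/-- The map induced on generalized loops by a continuous map. -/
noncomputable def genLoopMap (N : Type) {X Y : Type} [TopologicalSpace X]
    [TopologicalSpace Y] (f : C(X, Y)) (x : X) (g : GenLoop N X x) :
    GenLoop N Y (f x) :=
  ⟨f.comp g.1, fun y hy => by rw [ContinuousMap.comp_apply, g.2 y hy]⟩

/-- The map induced on the `N`-th homotopy group by a continuous map. -/
noncomputable def piNMap (N : Type) {X Y : Type} [TopologicalSpace X]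
    [TopologicalSpace Y] (f : C(X, Y)) (x : X) :
    HomotopyGroup N X x → HomotopyGroup N Y (f x) :=
  Quotient.map (genLoopMap N f x)
    (fun _ _ h => Nonempty.map (fun H => H.compContinuousMap f) h)

/-- A weak homotopy equivalence: the map induces a bijection on path components
and on all homotopy groups at all basepoints. -/
def IsWeakHomotopyEquiv {X Y : Type} [TopologicalSpace X] [TopologicalSpace Y]
    (f : C(X, Y)) : Prop :=
  Function.Bijective (pi0Map f) ∧
  ∀ (n : ℕ) (x : X), Function.Bijective (piNMap (Fin n) f x)

/-- `P ⊆ Q` is the inclusion of a deformation retract: there is a retraction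
`r : Q → P` such that the composite of `r` with the inclusion is homotopic to the
identity of `Q` relative to `P`. -/
def IsDefRetractIncl {Q : Type} [TopologicalSpace Q] (P : Set Q) : Prop :=
  ∃ r : C(Q, Q), (∀ q, r q ∈ P) ∧ (∀ p ∈ P, r p = p) ∧
    Nonempty (ContinuousMap.HomotopyRel r (ContinuousMap.id Q) P)


/-! ### Auxiliary constructions -/

/-- Any continuous map from a path `C(I, ℙX)` to the (discrete) state set is constant. -/
theorem Flow'.state_const {X : Flow'} {st : X.Path → X.State}
    (hst : @Continuous _ _ _ ⊥ st) (γ : C(I, X.Path)) (u v : I) :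
    st (γ u) = st (γ v) := by
  letI : TopologicalSpace X.State := ⊥
  haveI : DiscreteTopology X.State := ⟨rfl⟩
  exact PreconnectedSpace.constant inferInstance (hst.comp γ.continuous)

/-- The "path flow" (cylinder object) of a flow: same states, path space `C(I, ℙX)`,
with pointwise structure. -/
def pathFlow (X : Flow') : Flow' where
  State := X.State
  Path := C(I, X.Path)
  s γ := X.s (γ 0)
  t γ := X.t (γ 0)
  continuous_s := by
    letI : TopologicalSpace X.State := ⊥
    exact X.continuous_s.comp (continuous_eval_const 0)
  continuous_t := by
    letI : TopologicalSpace X.State := ⊥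
    exact X.continuous_t.comp (continuous_eval_const 0)
  comp γ δ h := ⟨fun u => X.comp (γ u) (δ u)
      (((Flow'.state_const X.continuous_t γ u 0).trans h).trans
        (Flow'.state_const X.continuous_s δ 0 u)),
    X.continuous_comp.comp ((γ.continuous.prodMk δ.continuous).subtype_mk
      (fun u => ((Flow'.state_const X.continuous_t γ u 0).trans h).trans
        (Flow'.state_const X.continuous_s δ 0 u)))⟩
  s_comp γ δ h := X.s_comp _ _ _
  t_comp γ δ h := X.t_comp _ _ _
  comp_assoc γ δ ε h₁ h₂ := ContinuousMap.ext fun u => X.comp_assoc _ _ _ _ _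
  continuous_comp := by
    apply ContinuousMap.continuous_of_continuous_uncurry
    have h1 : Continuous fun p :
        {p : C(I, X.Path) × C(I, X.Path) // X.t (p.1 0) = X.s (p.2 0)} × I =>
        ((p.1.1.1 p.2 : X.Path), (p.1.1.2 p.2 : X.Path)) := by
      refine Continuous.prodMk ?_ ?_
      · exact continuous_eval.comp
          (((continuous_subtype_val.comp continuous_fst).fst).prodMk continuous_snd)
      · exact continuous_eval.comp
          (((continuous_subtype_val.comp continuous_fst).snd).prodMk continuous_snd)
    have h2 := X.continuous_comp.comp (h1.subtype_mk
      (fun p => ((Flow'.state_const X.continuous_t p.1.1.1 p.2 0).trans p.1.2).trans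
        (Flow'.state_const X.continuous_s p.1.1.2 0 p.2)))
    exact h2

/-- Evaluation at `u : I` as a morphism of flows `pathFlow X ⟶ X`. -/
def evalHom (X : Flow') (u : I) : pathFlow X ⟶ X where
  toState := id
  toPath := fun γ : C(I, X.Path) => γ u
  continuous_toPath := by
    show Continuous fun γ : C(I, X.Path) => γ u
    exact continuous_eval_const u
  s_toPath γ := Flow'.state_const X.continuous_s γ u 0
  t_toPath γ := Flow'.state_const X.continuous_t γ u 0
  comp_toPath γ δ h := rfl

/-- Constant paths as a morphism of flows `X ⟶ pathFlow X`. -/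
def constHom (X : Flow') : X ⟶ pathFlow X where
  toState := id
  toPath := fun x => (ContinuousMap.const I x : C(I, X.Path))
  continuous_toPath := ContinuousMap.continuous_const'
  s_toPath x := rfl
  t_toPath x := rfl
  comp_toPath x y h := ContinuousMap.ext fun _ => rfl

/-- **Statement 16.** If `P → Q` is the inclusion of a deformation retract and
`f : A ⟶ X` arises as the pushout of `Glob(P) ⟶ Glob(Q)` along a morphism
`Glob(P) ⟶ A`, then `ℙf : ℙA → ℙX` is a weak homotopy equivalence. -/
theorem pathSpace_weakEquiv_of_pushout_glob {Q : Type} [TopologicalSpace Q]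
    (P : Set Q) (hP : IsDefRetractIncl P) {A X : Flow'}
    (φ : Glob ↥P ⟶ A) (inl : Glob Q ⟶ X) (f : A ⟶ X)
    (hpush : IsPushout
      (globHom (⟨Subtype.val, continuous_subtype_val⟩ : C(↥P, Q))) φ inl f) :
    IsWeakHomotopyEquiv ⟨FlowHom.toPath f, FlowHom.continuous_toPath f⟩ := by
  classical
  obtain ⟨r, hrP, hrfix, ⟨Hh⟩⟩ := hP
  set ι : C(↥P, Q) := ⟨Subtype.val, continuous_subtype_val⟩ with hι
  let r' : C(Q, ↥P) := ⟨fun q => ⟨r q, hrP q⟩, r.continuous.subtype_mk _⟩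
  have wρ : globHom ι ≫ (globHom r' ≫ φ) = φ ≫ 𝟙 A := by
    apply FlowHom.ext'
    · rfl
    · funext p
      exact congrArg (FlowHom.toPath φ) (Subtype.ext (hrfix (p : ↥P).1 (p : ↥P).2) :
        r' (ι p) = p)
  let ρ : X ⟶ A := hpush.desc (globHom r' ≫ φ) (𝟙 A) wρ
  have hfρ : f ≫ ρ = 𝟙 A := hpush.inr_desc _ _ _
  have hinlρ : inl ≫ ρ = globHom r' ≫ φ := hpush.inl_desc _ _ _
  have hw : globHom ι ≫ inl = φ ≫ f := hpush.w
  have hwPath : ∀ p : ↥P, (FlowHom.toPath inl) p.1 = (FlowHom.toPath f) ((FlowHom.toPath φ) p) := fun p =>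
    congrFun (congrArg FlowHom.toPath hw) p
  have hwState : ∀ b, (FlowHom.toState inl) b = (FlowHom.toState f) ((FlowHom.toState φ) b) := fun b =>
    congrFun (congrArg FlowHom.toState hw) b
  -- the homotopy, as a map into the path flow
  let c : C(Q, C(I, X.Path)) := ContinuousMap.curry
    ⟨fun p : Q × I => (FlowHom.toPath inl) (Hh (p.2, p.1)),
     inl.continuous_toPath.comp (Hh.continuous.comp (continuous_snd.prodMk continuous_fst))⟩
  have hc : ∀ (q : Q) (u : I), c q u = (FlowHom.toPath inl) (Hh (u, q)) := fun _ _ => rfl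
  let G : Glob Q ⟶ pathFlow X :=
    { toState := fun b => @FlowHom.toState (Glob Q) X inl b
      toPath := fun q => c q
      continuous_toPath := c.continuous
      s_toPath := fun q => by
        show X.s (c q 0) = (FlowHom.toState inl) ((Glob Q).s q)
        erw [hc, inl.s_toPath]
        rfl
      t_toPath := fun q => by
        show X.t (c q 0) = (FlowHom.toState inl) ((Glob Q).t q)
        erw [Flow'.state_const X.continuous_t (c q) 0 1, hc, inl.t_toPath]
        rfl
      comp_toPath := fun x y h => absurd h (Glob.not_composable x y) }
  have wK : globHom ι ≫ G = φ ≫ (f ≫ constHom X) := by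
    apply FlowHom.ext'
    · funext b
      exact hwState b
    · funext p
      show c (p : ↥P).1 = ContinuousMap.const I ((FlowHom.toPath f) ((FlowHom.toPath φ) p))
      ext u
      show c (p : ↥P).1 u = (FlowHom.toPath f) ((FlowHom.toPath φ) p)
      rw [hc, Hh.eq_fst u (p : ↥P).2]
      show (FlowHom.toPath inl) (r (p : ↥P).1) = _
      rw [hrfix (p : ↥P).1 (p : ↥P).2]
      exact hwPath p
  let K : X ⟶ pathFlow X := hpush.desc G (f ≫ constHom X) wK
  have hKinl : inl ≫ K = G := hpush.inl_desc _ _ _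
  have hKf : f ≫ K = f ≫ constHom X := hpush.inr_desc _ _ _
  have hK1 : K ≫ evalHom X 1 = 𝟙 X := by
    refine hpush.hom_ext ?_ ?_
    · rw [Category.comp_id, ← Category.assoc, hKinl]
      apply FlowHom.ext'
      · rfl
      · funext q
        show c q 1 = (FlowHom.toPath inl) q
        erw [hc, Hh.apply_one]
        rfl
    · rw [Category.comp_id, ← Category.assoc, hKf]
      exact FlowHom.ext' rfl rfl
  have hK0 : K ≫ evalHom X 0 = ρ ≫ f := by
    refine hpush.hom_ext ?_ ?_
    · rw [← Category.assoc, hKinl, ← Category.assoc, hinlρ, Category.assoc, ← hw,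
        ← Category.assoc]
      apply FlowHom.ext'
      · rfl
      · funext q
        show c q 0 = (FlowHom.toPath inl) (ι (r' q))
        erw [hc, Hh.apply_zero]
        rfl
    · rw [← Category.assoc, hKf, ← Category.assoc, hfρ, Category.id_comp]
      exact FlowHom.ext' rfl rfl
  -- pointwise consequences
  let KP : X.Path → C(I, X.Path) := FlowHom.toPath K
  have hgf : ∀ a, (FlowHom.toPath ρ) ((FlowHom.toPath f) a) = a := fun a =>
    congrFun (congrArg FlowHom.toPath hfρ) a
  have hK1' : ∀ x, (KP x) 1 = x := fun x =>
    congrFun (congrArg FlowHom.toPath hK1) x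
  have hK0' : ∀ x, (KP x) 0 = (FlowHom.toPath f) ((FlowHom.toPath ρ) x) := fun x =>
    congrFun (congrArg FlowHom.toPath hK0) x
  have hKconst : ∀ (a : A.Path) (u : I), (KP ((FlowHom.toPath f) a)) u = (FlowHom.toPath f) a := by
    intro a u
    have h1 : KP ((FlowHom.toPath f) a) = ContinuousMap.const I ((FlowHom.toPath f) a) :=
      congrFun (congrArg FlowHom.toPath hKf) a
    rw [h1]
    rfl
  have hKcont : Continuous fun p : I × X.Path => (KP p.2) p.1 := by
    have h1 : Continuous KP := K.continuous_toPath
    exact continuous_eval.comp ((h1.comp continuous_snd).prodMk continuous_fst)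
  set fC : C(A.Path, X.Path) := ⟨FlowHom.toPath f, FlowHom.continuous_toPath f⟩ with hfC
  let gC : C(X.Path, A.Path) := ⟨(FlowHom.toPath ρ), ρ.continuous_toPath⟩
  constructor
  · constructor
    · intro u v huv
      induction u using Quotient.inductionOn with | h a => ?_
      induction v using Quotient.inductionOn with | h b => ?_
      have h1 : Joined (fC a) (fC b) := Quotient.exact huv
      obtain ⟨p⟩ := h1
      exact Quotient.sound
        ⟨((p.map gC.continuous).cast (hgf a).symm (hgf b).symm : Path a b)⟩
    · intro y
      induction y using Quotient.inductionOn with | h x => ?_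
      refine ⟨⟦gC x⟧, ?_⟩
      exact Quotient.sound
        ⟨({ toContinuousMap := KP x
            source' := hK0' x
            target' := hK1' x } : Path (fC (gC x)) x)⟩
  · intro n a
    constructor
    · intro u v huv
      induction u using Quotient.inductionOn with | h α => ?_
      induction v using Quotient.inductionOn with | h β => ?_
      obtain ⟨F⟩ : (genLoopMap (Fin n) fC a α).1.HomotopicRel
          (genLoopMap (Fin n) fC a β).1 (Cube.boundary (Fin n)) := Quotient.exact huv
      have e1 : gC.comp (fC.comp α.1) = α.1 := ContinuousMap.ext fun y => hgf (α.1 y)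
      have e2 : gC.comp (fC.comp β.1) = β.1 := ContinuousMap.ext fun y => hgf (β.1 y)
      exact Quotient.sound ⟨(F.compContinuousMap gC).cast e1 e2⟩
    · intro y
      induction y using Quotient.inductionOn with | h β => ?_
      have hb : ∀ z ∈ Cube.boundary (Fin n), β.1 z = fC a := β.2
      refine ⟨⟦(⟨gC.comp β.1, fun z hz => by
        show gC (β.1 z) = a
        rw [hb z hz]
        exact hgf a⟩ : GenLoop (Fin n) A.Path a)⟧, ?_⟩
      refine Quotient.sound ⟨?_⟩
      exact
        { toFun := fun p => (KP (β.1 p.2)) p.1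
          continuous_toFun := hKcont.comp
            (continuous_fst.prodMk (β.1.continuous.comp continuous_snd))
          map_zero_left := fun z => hK0' (β.1 z)
          map_one_left := fun z => hK1' (β.1 z)
          prop' := fun t z hz => by
            show (KP (β.1 z)) t = fC ((FlowHom.toPath ρ) (β.1 z))
            rw [hb z hz]
            rw [show (KP (fC a)) t = fC a from hKconst a t]
            rw [show (FlowHom.toPath ρ) (fC a) = a from hgf a] }
end
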